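/- Let ζ ∈ ℂ ∖ (−∞,0], let f ∈ 𝒮(ℝ³; ℂ) be a Schwartz function, and let ξ⁰ ∈ ℝ. For η = (η⁰, η⃗) ∈ V₊ set I(η) := ∫_{ℝ³} f(x) · W_ζ((ξ⁰ − iη⁰, x₁ − iη₁, x₂ − iη₂, x₃ − iη₃)) dx. Then as η → 0 within V₊ (i.e., along the filter of neighborhoods of 0 in ℝ⁴ restricted to V₊), I(η) converges to (2π)⁻³ ∫_{ℝ³} (2 E_ζ(k))⁻¹ · e^{−i E_ζ(k) ξ⁰} · f̂(k) dk, where f̂(k) := ∫_{ℝ³} f(x) e^{i(k₁x₁ + k₂x₂ + k₃x₃)} dx. -/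

import Mathlib

open MeasureTheory Complex

/-- Principal branch of `√(‖k‖² + ζ)` for `k ∈ ℝ³`. -/
noncomputable def Esqrt (ζ : ℂ) (k : EuclideanSpace ℝ (Fin 3)) : ℂ :=
  ((‖k‖ ^ 2 : ℝ) + ζ) ^ ((1 : ℂ) / 2)

/-- The holomorphic Wightman function `W_ζ(z)` of a simple (possibly complex-mass) pole. -/
noncomputable def Wpole (ζ : ℂ) (z : Fin 4 → ℂ) : ℂ :=
  ((2 * Real.pi : ℝ) : ℂ)⁻¹ ^ 3 * ∫ k : EuclideanSpace ℝ (Fin 3),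
    (2 * Esqrt ζ k)⁻¹ *
      Complex.exp (-Complex.I * Esqrt ζ k * z 0 +
        Complex.I * ((k 0 : ℂ) * z 1 + (k 1 : ℂ) * z 2 + (k 2 : ℂ) * z 3))

/-- The open forward light cone `V₊ = {η ∈ ℝ⁴ : η⁰ > |η⃗|}`. -/
def ForwardCone : Set (Fin 4 → ℝ) :=
  {η | Real.sqrt ((η 1) ^ 2 + (η 2) ^ 2 + (η 3) ^ 2) < η 0}

/-!
For `η ∈ V₊` the Wightman integrand at `(ξ⁰ - iη⁰, x⃗ - iη⃗)` is bounded by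
`C e^{-(η⁰ - |η⃗|)|k|}`, because `Re E_ζ(k) ≥ |k| - √|ζ|` and `|Im E_ζ(k)| ≤ |Im ζ| / (2 Re √ζ)`.
Hence the `(x, k)` double integral converges absolutely, and Fubini turns `I(η)` into
`(2π)⁻³ ∫ (2E_ζ(k))⁻¹ e^{-iE_ζ(k)(ξ⁰ - iη⁰) + k·η⃗} f̂(k) dk`. For `η⁰ < 1` this kernel is bounded
uniformly in `k`, while `f̂` is integrable as a rescaled Fourier transform of a Schwartz
function, so dominated convergence gives the limit `η → 0`.
-/

open Filter Topology
open scoped InnerProductSpace Nat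

namespace Complex

lemma re_cpow_one_half_pos {w : ℂ} (hw : w ∈ slitPlane) : 0 < (w ^ (1 / 2 : ℂ)).re := by
  rw [cpow_def_of_ne_zero (slitPlane_ne_zero hw), exp_re]
  refine mul_pos (Real.exp_pos _) (Real.cos_pos_of_mem_Ioo ?_)
  have harg : (log w * (1 / 2)).im = w.arg / 2 := by simp [log_im, div_eq_mul_inv]
  have hlt : w.arg < Real.pi := (arg_le_pi w).lt_of_ne (slitPlane_arg_ne_pi hw)
  rw [harg]
  constructor <;> linarith [neg_pi_lt_arg w]

lemma cpow_one_half_sq (w : ℂ) : (w ^ (1 / 2 : ℂ)) ^ 2 = w := by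
  simp

lemma re_sq_of_sq_eq {e w : ℂ} (h : e ^ 2 = w) : e.re ^ 2 = (‖w‖ + w.re) / 2 := by
  have hre : e.re ^ 2 - e.im ^ 2 = w.re := by rw [← h]; simp [sq]
  have hnorm : e.re ^ 2 + e.im ^ 2 = ‖w‖ := by
    rw [← h, norm_pow, Complex.sq_norm, normSq_apply]; ring
  linarith

lemma two_mul_re_mul_im_of_sq_eq {e w : ℂ} (h : e ^ 2 = w) : 2 * e.re * e.im = w.im := by
  rw [← h]; simp [sq]; ring

lemma ofReal_add_mem_slitPlane {w : ℂ} (hw : w ∈ slitPlane) {t : ℝ} (ht : 0 ≤ t) :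
    (t : ℂ) + w ∈ slitPlane := by
  rw [mem_slitPlane_iff] at hw ⊢
  simp only [add_re, ofReal_re, add_im, ofReal_im, zero_add]
  rcases hw with hw | hw
  · exact .inl (by linarith)
  · exact .inr hw

lemma re_cpow_one_half_le_re_cpow_one_half_ofReal_add {w : ℂ} (hw : w ∈ slitPlane) {t : ℝ}
    (ht : 0 ≤ t) : (w ^ (1 / 2 : ℂ)).re ≤ ((t + w) ^ (1 / 2 : ℂ)).re := by
  have htri : ‖w‖ ≤ ‖(t : ℂ) + w‖ + t := by
    simpa [abs_of_nonneg ht] using norm_sub_le ((t : ℂ) + w) t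
  refine (pow_le_pow_iff_left₀ (re_cpow_one_half_pos hw).le
    (re_cpow_one_half_pos (ofReal_add_mem_slitPlane hw ht)).le two_ne_zero).1 ?_
  rw [re_sq_of_sq_eq (cpow_one_half_sq _), re_sq_of_sq_eq (cpow_one_half_sq _)]
  simp only [add_re, ofReal_re]
  linarith

lemma sqrt_sub_sqrt_norm_le_re_cpow_one_half_ofReal_add {w : ℂ} (hw : w ∈ slitPlane) {t : ℝ}
    (ht : 0 ≤ t) : √t - √‖w‖ ≤ ((t + w) ^ (1 / 2 : ℂ)).re := by
  set e := ((t : ℂ) + w) ^ (1 / 2 : ℂ)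
  have he : 0 < e.re := re_cpow_one_half_pos (ofReal_add_mem_slitPlane hw ht)
  have hsq : t - ‖w‖ ≤ e.re ^ 2 := by
    rw [re_sq_of_sq_eq (cpow_one_half_sq _)]
    have := re_le_norm ((t : ℂ) + w)
    simp only [add_re, ofReal_re] at this ⊢
    linarith [neg_abs_le w.re, abs_re_le_norm w]
  rcases le_total √t √‖w‖ with h | h
  · linarith
  · have ht' := Real.sq_sqrt ht
    have hw' := Real.sq_sqrt (norm_nonneg w)
    nlinarith [Real.sqrt_nonneg ‖w‖]

lemma abs_im_cpow_one_half_ofReal_add_le {w : ℂ} (hw : w ∈ slitPlane) {t : ℝ} (ht : 0 ≤ t) :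
    |((t + w) ^ (1 / 2 : ℂ)).im| ≤ |w.im| / (2 * (w ^ (1 / 2 : ℂ)).re) := by
  set e := ((t : ℂ) + w) ^ (1 / 2 : ℂ)
  have hc := re_cpow_one_half_pos hw
  have hle := re_cpow_one_half_le_re_cpow_one_half_ofReal_add hw ht
  have hprod : 2 * e.re * e.im = w.im := by
    rw [two_mul_re_mul_im_of_sq_eq (cpow_one_half_sq _), add_im, ofReal_im, zero_add]
  rw [le_div_iff₀ (by positivity), ← hprod, abs_mul, abs_of_pos (by linarith : 0 < 2 * e.re)]
  nlinarith [abs_nonneg e.im]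

end Complex

section Esqrt

variable {ζ : ℂ}

lemma mem_slitPlane_of_forall_ne_ofReal (hζ : ∀ x : ℝ, x ≤ 0 → ζ ≠ (x : ℂ)) :
    ζ ∈ slitPlane := by
  by_contra h
  rw [mem_slitPlane_iff] at h
  push Not at h
  exact hζ ζ.re h.1 (ext rfl (by simp [h.2]))

lemma Esqrt_re_pos (hζ : ζ ∈ slitPlane) (k : EuclideanSpace ℝ (Fin 3)) :
    0 < (Esqrt ζ k).re :=
  re_cpow_one_half_pos (ofReal_add_mem_slitPlane hζ (sq_nonneg _))

lemma Esqrt_ne_zero (hζ : ζ ∈ slitPlane) (k : EuclideanSpace ℝ (Fin 3)) : Esqrt ζ k ≠ 0 :=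
  fun h ↦ by simpa [h] using Esqrt_re_pos hζ k

lemma re_cpow_one_half_le_Esqrt_re (hζ : ζ ∈ slitPlane) (k : EuclideanSpace ℝ (Fin 3)) :
    (ζ ^ (1 / 2 : ℂ)).re ≤ (Esqrt ζ k).re :=
  re_cpow_one_half_le_re_cpow_one_half_ofReal_add hζ (sq_nonneg _)

lemma norm_sub_sqrt_norm_le_Esqrt_re (hζ : ζ ∈ slitPlane) (k : EuclideanSpace ℝ (Fin 3)) :
    ‖k‖ - √‖ζ‖ ≤ (Esqrt ζ k).re := by
  have := sqrt_sub_sqrt_norm_le_re_cpow_one_half_ofReal_add hζ (sq_nonneg ‖k‖)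
  rwa [Real.sqrt_sq (norm_nonneg k)] at this

lemma abs_Esqrt_im_le (hζ : ζ ∈ slitPlane) (k : EuclideanSpace ℝ (Fin 3)) :
    |(Esqrt ζ k).im| ≤ |ζ.im| / (2 * (ζ ^ (1 / 2 : ℂ)).re) :=
  abs_im_cpow_one_half_ofReal_add_le hζ (sq_nonneg _)

lemma norm_inv_two_mul_Esqrt_le (hζ : ζ ∈ slitPlane) (k : EuclideanSpace ℝ (Fin 3)) :
    ‖(2 * Esqrt ζ k)⁻¹‖ ≤ (2 * (ζ ^ (1 / 2 : ℂ)).re)⁻¹ := by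
  rw [norm_inv, norm_mul, Complex.norm_two]
  gcongr
  · exact mul_pos two_pos (re_cpow_one_half_pos hζ)
  · exact (re_cpow_one_half_le_Esqrt_re hζ k).trans (re_le_norm _)

lemma continuous_Esqrt (hζ : ζ ∈ slitPlane) : Continuous (Esqrt ζ) :=
  continuous_iff_continuousAt.2 fun k ↦ ContinuousAt.comp (g := (· ^ (1 / 2 : ℂ)))
    (continuousAt_cpow_const (ofReal_add_mem_slitPlane hζ (sq_nonneg ‖k‖))) (by fun_prop)

end Esqrt

def spatialPart (η : Fin 4 → ℝ) : EuclideanSpace ℝ (Fin 3) := !₂[η 1, η 2, η 3]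

lemma mem_forwardCone_iff {η : Fin 4 → ℝ} : η ∈ ForwardCone ↔ ‖spatialPart η‖ < η 0 := by
  simp [ForwardCone, spatialPart, EuclideanSpace.norm_eq, Fin.sum_univ_three]

@[simp]
lemma spatialPart_zero : spatialPart 0 = 0 := by
  ext i; fin_cases i <;> simp [spatialPart]

lemma continuous_spatialPart : Continuous spatialPart := by
  unfold spatialPart; fun_prop

lemma integrable_exp_neg_mul_norm {E : Type*} [NormedAddCommGroup E] [NormedSpace ℝ E]
    [FiniteDimensional ℝ E] [MeasurableSpace E] [BorelSpace E] {μ : Measure E}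
    [μ.IsAddHaarMeasure] {ε : ℝ} (hε : 0 < ε) :
    Integrable (fun x : E ↦ Real.exp (-ε * ‖x‖)) μ := by
  set n := Module.finrank ℝ E + 1
  have hpoly := integrable_one_add_norm (E := E) (μ := μ) (r := n) (by simp [n])
  refine (hpoly.const_mul (Real.exp ε * n ! / ε ^ n)).mono' (by fun_prop) (ae_of_all _ fun x ↦ ?_)
  have hexp := Real.pow_div_factorial_le_exp (x := ε * (1 + ‖x‖)) (by positivity) n
  rw [Real.norm_of_nonneg (Real.exp_pos _).le, Real.rpow_neg (by positivity), Real.rpow_natCast]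
  calc Real.exp (-ε * ‖x‖) = Real.exp ε / Real.exp (ε * (1 + ‖x‖)) := by
        rw [← Real.exp_sub]; ring_nf
    _ ≤ Real.exp ε / ((ε * (1 + ‖x‖)) ^ n / n !) :=
        div_le_div_of_nonneg_left (Real.exp_pos _).le (by positivity) hexp
    _ = Real.exp ε * n ! / ε ^ n * ((1 + ‖x‖) ^ n)⁻¹ := by
        rw [mul_pow]; field_simp

lemma tendsto_integral_mul_of_norm_le {ι α : Type*} {l : Filter ι} [l.IsCountablyGenerated]
    [MeasurableSpace α] {μ : Measure α} {F : ι → α → ℂ} {G h : α → ℂ} {C : ℝ}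
    (hF_meas : ∀ᶠ i in l, AEStronglyMeasurable (F i) μ) (hF_le : ∀ᶠ i in l, ∀ a, ‖F i a‖ ≤ C)
    (hF_lim : ∀ a, Tendsto (F · a) l (𝓝 (G a))) (hh : Integrable h μ) :
    Tendsto (fun i ↦ ∫ a, F i a * h a ∂μ) l (𝓝 (∫ a, G a * h a ∂μ)) := by
  refine tendsto_integral_filter_of_dominated_convergence (fun a ↦ C * ‖h a‖)
    (hF_meas.mono fun i hi ↦ hi.mul hh.aestronglyMeasurable) ?_ (hh.norm.const_mul C)
    (ae_of_all _ fun a ↦ (hF_lim a).mul_const (h a))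
  filter_upwards [hF_le] with i hi
  exact ae_of_all _ fun a ↦ by
    rw [norm_mul]; exact mul_le_mul_of_nonneg_right (hi a) (norm_nonneg _)

lemma integral_mul_integral_mul_swap {X Y : Type*} [MeasurableSpace X] [MeasurableSpace Y]
    {μ : Measure X} {ν : Measure Y} [SFinite μ] [SFinite ν] {f : X → ℂ} {g : Y → ℂ}
    {e : X → Y → ℂ} (hf : Integrable f μ) (hg : Integrable g ν)
    (he : AEStronglyMeasurable (Function.uncurry e) (μ.prod ν)) (he_le : ∀ x y, ‖e x y‖ ≤ 1) :
    ∫ x, f x * ∫ y, g y * e x y ∂ν ∂μ = ∫ y, g y * ∫ x, f x * e x y ∂μ ∂ν := by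
  have hint : Integrable (Function.uncurry fun x y ↦ f x * (g y * e x y)) (μ.prod ν) := by
    refine (hf.norm.mul_prod hg.norm).mono'
      ((hf.aestronglyMeasurable.comp_fst.mul hg.aestronglyMeasurable.comp_snd).mul he |>.congr
        (ae_of_all _ fun p ↦ by simp [Function.uncurry, mul_assoc])) (ae_of_all _ fun p ↦ ?_)
    show ‖f p.1 * (g p.2 * e p.1 p.2)‖ ≤ ‖f p.1‖ * ‖g p.2‖
    rw [norm_mul, norm_mul]
    exact mul_le_mul_of_nonneg_left (mul_le_of_le_one_right (norm_nonneg _) (he_le _ _))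
      (norm_nonneg _)
  simp_rw [← integral_const_mul]
  rw [integral_integral_swap hint]
  congr 1 with y
  congr 1 with x
  ring

open scoped FourierTransform SchwartzMap in
lemma integrable_integral_mul_cexp_inner {V : Type*} [NormedAddCommGroup V]
    [InnerProductSpace ℝ V] [FiniteDimensional ℝ V] [MeasurableSpace V] [BorelSpace V]
    (f : 𝓢(V, ℂ)) : Integrable (fun k : V ↦ ∫ x, f x * cexp (I * ⟪x, k⟫_ℝ)) := by
  -- the integral is the Fourier transform `𝓕 f`, with phase `e^{-2πi⟪x, w⟫}`, at `w = -k / 2π`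
  have hfourier : ∀ k : V, ∫ x, f x * cexp (I * ⟪x, k⟫_ℝ) = 𝓕 f (-(2 * Real.pi)⁻¹ • k) := by
    intro k
    rw [SchwartzMap.fourier_coe, Real.fourier_eq']
    congr 1 with x
    rw [smul_eq_mul, mul_comm, real_inner_smul_right]
    congr 2
    push_cast
    field_simp
  simp_rw [hfourier]
  exact (𝓕 f).integrable.comp_smul (by simp [Real.pi_ne_zero])

lemma inner_eq_sum_three (x k : EuclideanSpace ℝ (Fin 3)) :
    ⟪x, k⟫_ℝ = k 0 * x 0 + k 1 * x 1 + k 2 * x 2 := by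
  simp [PiLp.inner_apply, Fin.sum_univ_three]

section WightmanKernel

variable {ζ : ℂ} (ξ0 : ℝ)

noncomputable def wightmanKernel (ζ : ℂ) (ξ0 : ℝ) (η : Fin 4 → ℝ) (k : EuclideanSpace ℝ (Fin 3)) :
    ℂ :=
  (2 * Esqrt ζ k)⁻¹ * cexp (-I * Esqrt ζ k * (ξ0 - I * η 0) + ⟪spatialPart η, k⟫_ℝ)

lemma wightmanKernel_zero (k : EuclideanSpace ℝ (Fin 3)) :
    wightmanKernel ζ ξ0 0 k = (2 * Esqrt ζ k)⁻¹ * cexp (-I * Esqrt ζ k * ξ0) := by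
  simp [wightmanKernel]

lemma Wpole_eq_integral_wightmanKernel (η : Fin 4 → ℝ) (x : EuclideanSpace ℝ (Fin 3)) :
    Wpole ζ ![(ξ0 : ℂ) - I * (η 0 : ℂ), (x 0 : ℂ) - I * (η 1 : ℂ),
        (x 1 : ℂ) - I * (η 2 : ℂ), (x 2 : ℂ) - I * (η 3 : ℂ)] =
      ((2 * Real.pi : ℝ) : ℂ)⁻¹ ^ 3 *
        ∫ k, wightmanKernel ζ ξ0 η k * cexp (I * ⟪x, k⟫_ℝ) := by
  simp only [Wpole, wightmanKernel, Matrix.cons_val]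
  congr 2 with k
  rw [mul_assoc (2 * Esqrt ζ k)⁻¹, ← Complex.exp_add, inner_eq_sum_three, inner_eq_sum_three]
  congr 2
  simp only [spatialPart, PiLp.toLp_apply]
  push_cast
  linear_combination (-(k 0 : ℂ) * η 1 - k 1 * η 2 - k 2 * η 3) * I_sq

lemma norm_wightmanKernel_le (hζ : ζ ∈ slitPlane) {η : Fin 4 → ℝ}
    (hη : ‖spatialPart η‖ ≤ η 0) (k : EuclideanSpace ℝ (Fin 3)) :
    ‖wightmanKernel ζ ξ0 η k‖ ≤ (2 * (ζ ^ (1 / 2 : ℂ)).re)⁻¹ *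
      Real.exp (|ζ.im| / (2 * (ζ ^ (1 / 2 : ℂ)).re) * |ξ0| + √‖ζ‖ * η 0
        - (η 0 - ‖spatialPart η‖) * ‖k‖) := by
  have hre_exp : ∀ (E : ℂ) (r : ℝ),
      (-I * E * (ξ0 - I * η 0) + r).re = E.im * ξ0 - E.re * η 0 + r := fun E r ↦ by
    simp [mul_re, mul_im]; ring
  rw [wightmanKernel, norm_mul, norm_exp, hre_exp]
  refine mul_le_mul (norm_inv_two_mul_Esqrt_le hζ k) (Real.exp_le_exp.2 ?_) (Real.exp_pos _).le
    (by simpa using (re_cpow_one_half_pos hζ).le)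
  have him : (Esqrt ζ k).im * ξ0 ≤ |ζ.im| / (2 * (ζ ^ (1 / 2 : ℂ)).re) * |ξ0| :=
    (le_abs_self _).trans ((abs_mul _ _).trans_le
      (mul_le_mul_of_nonneg_right (abs_Esqrt_im_le hζ k) (abs_nonneg _)))
  have hre : (‖k‖ - √‖ζ‖) * η 0 ≤ (Esqrt ζ k).re * η 0 :=
    mul_le_mul_of_nonneg_right (norm_sub_sqrt_norm_le_Esqrt_re hζ k)
      ((norm_nonneg _).trans hη)
  have hinner : ⟪spatialPart η, k⟫_ℝ ≤ ‖spatialPart η‖ * ‖k‖ := real_inner_le_norm _ _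
  linarith

lemma continuous_wightmanKernel (hζ : ζ ∈ slitPlane) :
    Continuous (Function.uncurry (wightmanKernel ζ ξ0)) := by
  have hE := continuous_Esqrt hζ
  have := continuous_spatialPart
  unfold wightmanKernel
  refine Continuous.mul ?_ (by fun_prop)
  exact (continuous_const.mul (hE.comp continuous_snd)).inv₀
    fun p ↦ mul_ne_zero two_ne_zero (Esqrt_ne_zero hζ p.2)

lemma integrable_wightmanKernel (hζ : ζ ∈ slitPlane) {η : Fin 4 → ℝ}
    (hη : ‖spatialPart η‖ < η 0) : Integrable (wightmanKernel ζ ξ0 η) := by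
  refine ((integrable_exp_neg_mul_norm (sub_pos.2 hη)).const_mul
    ((2 * (ζ ^ (1 / 2 : ℂ)).re)⁻¹ *
      Real.exp (|ζ.im| / (2 * (ζ ^ (1 / 2 : ℂ)).re) * |ξ0| + √‖ζ‖ * η 0))).mono'
    (continuous_wightmanKernel ξ0 hζ |>.comp (Continuous.prodMk_right η)).aestronglyMeasurable
    (ae_of_all _ fun k ↦ (norm_wightmanKernel_le ξ0 hζ hη.le k).trans_eq ?_)
  rw [sub_eq_add_neg, Real.exp_add, neg_mul]
  ring

end WightmanKernel

section Smeared

variable {ζ : ℂ} (ξ0 : ℝ)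

lemma integral_mul_Wpole_eq (hζ : ζ ∈ slitPlane) (f : SchwartzMap (EuclideanSpace ℝ (Fin 3)) ℂ)
    {η : Fin 4 → ℝ} (hη : η ∈ ForwardCone) :
    ∫ x, f x * Wpole ζ ![(ξ0 : ℂ) - I * (η 0 : ℂ), (x 0 : ℂ) - I * (η 1 : ℂ),
        (x 1 : ℂ) - I * (η 2 : ℂ), (x 2 : ℂ) - I * (η 3 : ℂ)] =
      ((2 * Real.pi : ℝ) : ℂ)⁻¹ ^ 3 *
        ∫ k, wightmanKernel ζ ξ0 η k * ∫ x, f x * cexp (I * ⟪x, k⟫_ℝ) := by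
  simp_rw [Wpole_eq_integral_wightmanKernel, mul_left_comm (f _), integral_const_mul]
  congr 1
  refine integral_mul_integral_mul_swap f.integrable
    (integrable_wightmanKernel ξ0 hζ (mem_forwardCone_iff.1 hη))
    (by fun_prop : Continuous fun p : EuclideanSpace ℝ (Fin 3) × EuclideanSpace ℝ (Fin 3) ↦
      cexp (I * ⟪p.1, p.2⟫_ℝ)).aestronglyMeasurable fun x k ↦ ?_
  rw [mul_comm, norm_exp_ofReal_mul_I]

lemma tendsto_integral_wightmanKernel_mul (hζ : ζ ∈ slitPlane)
    {h : EuclideanSpace ℝ (Fin 3) → ℂ} (hh : Integrable h) :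
    Tendsto (fun η ↦ ∫ k, wightmanKernel ζ ξ0 η k * h k) (𝓝[ForwardCone] 0)
      (𝓝 (∫ k, wightmanKernel ζ ξ0 0 k * h k)) := by
  have hcont := continuous_wightmanKernel ξ0 hζ
  have hsmall : ∀ᶠ η in 𝓝[ForwardCone] (0 : Fin 4 → ℝ), η 0 < 1 :=
    nhdsWithin_le_nhds (((continuous_apply 0).tendsto 0).eventually (eventually_lt_nhds one_pos))
  refine tendsto_integral_mul_of_norm_le (C := (2 * (ζ ^ (1 / 2 : ℂ)).re)⁻¹ *
      Real.exp (|ζ.im| / (2 * (ζ ^ (1 / 2 : ℂ)).re) * |ξ0| + √‖ζ‖))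
    (.of_forall fun η ↦ (hcont.comp (Continuous.prodMk_right η)).aestronglyMeasurable) ?_
    (fun k ↦ ((hcont.comp (Continuous.prodMk_left k)).tendsto 0).mono_left nhdsWithin_le_nhds) hh
  filter_upwards [self_mem_nhdsWithin, hsmall] with η hη hη1 k
  have hcone := (mem_forwardCone_iff.1 hη).le
  refine (norm_wightmanKernel_le ξ0 hζ hcone k).trans
    (mul_le_mul_of_nonneg_left (Real.exp_le_exp.2 ?_) (by simpa using (re_cpow_one_half_pos hζ).le))
  nlinarith [Real.sqrt_nonneg ‖ζ‖, norm_nonneg k, mul_nonneg (sub_nonneg.2 hcone) (norm_nonneg k)]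

end Smeared

/-- Theorem 4 of the paper: for `ζ ∈ ℂ ∖ (−∞,0]`, a Schwartz function `f` on
`ℝ³` and a real time `ξ⁰`, the spatially smeared holomorphic Wightman function
`I(η) = ∫ f(x) W_ζ(ξ⁰−iη⁰, x⃗−iη⃗) dx` converges, as `η → 0` within the forward cone `V₊`,
to `(2π)⁻³ ∫ (2E_ζ(k))⁻¹ e^{−iE_ζ(k)ξ⁰} f̂(k) dk`. -/
theorem wightman_boundary_value (ζ : ℂ) (hζ : ∀ x : ℝ, x ≤ 0 → ζ ≠ (x : ℂ))
    (f : SchwartzMap (EuclideanSpace ℝ (Fin 3)) ℂ) (ξ0 : ℝ) :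
    Filter.Tendsto
      (fun η : Fin 4 → ℝ => ∫ x : EuclideanSpace ℝ (Fin 3),
        f x * Wpole ζ ![(ξ0 : ℂ) - Complex.I * (η 0 : ℂ), (x 0 : ℂ) - Complex.I * (η 1 : ℂ),
          (x 1 : ℂ) - Complex.I * (η 2 : ℂ), (x 2 : ℂ) - Complex.I * (η 3 : ℂ)])
      (nhdsWithin 0 ForwardCone)
      (nhds (((2 * Real.pi : ℝ) : ℂ)⁻¹ ^ 3 * ∫ k : EuclideanSpace ℝ (Fin 3),
        (2 * Esqrt ζ k)⁻¹ * Complex.exp (-Complex.I * Esqrt ζ k * (ξ0 : ℂ)) *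
          ∫ x : EuclideanSpace ℝ (Fin 3),
            f x * Complex.exp (Complex.I * ((k 0 * x 0 + k 1 * x 1 + k 2 * x 2 : ℝ) : ℂ)))) := by
  have hζ' := mem_slitPlane_of_forall_ne_ofReal hζ
  simp_rw [← inner_eq_sum_three, ← wightmanKernel_zero ξ0]
  refine ((tendsto_integral_wightmanKernel_mul ξ0 hζ'
    (integrable_integral_mul_cexp_inner f)).const_mul _).congr' ?_
  filter_upwards [self_mem_nhdsWithin] with η hη
  exact (integral_mul_Wpole_eq ξ0 hζ' f hη).symm
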